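/- arXiv:1706.04644 — 2 statements merged into one kernel-verified Lean document; each statement's English description precedes it below -/
import Mathlib

section
/- For each r = 1,...,n, the elementary symmetric polynomial σ_r : ℝ^n → ℝ is hyperbolic with respect to the vector a = (1,1,...,1), i.e., for every x ∈ ℝ^n the polynomial s ↦ σ_r(sa + x) has r real roots counted with multiplicity. -/
open Finset

/-- The `r`-th elementary symmetric polynomial of `x ∈ ℝⁿ` (with `σ_0 = 1`). -/
noncomputable def esym (n r : ℕ) (x : Fin n → ℝ) : ℝ :=
  ∑ s ∈ (Finset.univ : Finset (Fin n)).powersetCard r, ∏ i ∈ s, x i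

/-- A function `P : ℝⁿ → ℝ` is hyperbolic of degree `m` with respect to `a ∈ ℝⁿ` if for
every `x` the polynomial `s ↦ P(sa + x)` has `m` real roots counted with multiplicity. -/
def IsHyperbolic {n : ℕ} (m : ℕ) (P : (Fin n → ℝ) → ℝ) (a : Fin n → ℝ) : Prop :=
  ∀ x : Fin n → ℝ, ∃ (c : ℝ) (roots : Fin m → ℝ),
    ∀ s : ℝ, P (s • a + x) = c * ∏ i : Fin m, (s - roots i)

/-!
`σ_r(s + x₁, …, s + xₙ)` is the coefficient of `t^(n-r)` in `∏ᵢ (t + s + xᵢ)`, i.e. the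
`(n-r)`-th Taylor coefficient at `s` of `P = ∏ᵢ (X + xᵢ)`. Hence `s ↦ σ_r(s·1 + x)` is the
Hasse derivative `P^(n-r) / (n-r)!`, a polynomial of degree `r`. Since `P` has only
real roots, Rolle's theorem shows that all its derivatives do as well.
-/

namespace Polynomial

theorem Splits.derivative_of_real {p : ℝ[X]} (hp : p.Splits) : (derivative p).Splits := by
  rw [splits_iff_card_roots] at hp ⊢
  have h_rolle := card_roots_le_derivative p
  have h_le := card_roots' (derivative p)
  have h_deg := natDegree_derivative_le p
  omega

theorem Splits.iterate_derivative_of_real {p : ℝ[X]} (hp : p.Splits) (k : ℕ) :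
    (derivative^[k] p).Splits := by
  induction k with
  | zero => exact hp
  | succ k ih => simpa only [Function.iterate_succ_apply'] using ih.derivative_of_real

theorem Splits.hasseDeriv_of_real {p : ℝ[X]} (hp : p.Splits) (k : ℕ) :
    (hasseDeriv k p).Splits := by
  have hk : (k.factorial : ℝ) ≠ 0 := by positivity
  have h := hp.iterate_derivative_of_real k
  rw [← factorial_smul_hasseDeriv, LinearMap.smul_apply, ← Nat.cast_smul_eq_nsmul ℝ,
    smul_eq_C_mul] at h
  rwa [splits_iff_card_roots, roots_C_mul _ hk, natDegree_C_mul hk, ← splits_iff_card_roots] at h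

theorem Splits.exists_eval_eq_leadingCoeff_mul_prod {R : Type*} [CommRing R] [IsDomain R]
    {p : R[X]} (hp : p.Splits) {m : ℕ} (hm : p.natDegree = m) :
    ∃ roots : Fin m → R, ∀ s, p.eval s = p.leadingCoeff * ∏ i, (s - roots i) := by
  have hlen : p.roots.toList.length = m := by
    rw [Multiset.length_toList, splits_iff_card_roots.mp hp, hm]
  subst hlen
  refine ⟨fun i => p.roots.toList[i.1], fun s => ?_⟩
  rw [hp.eval_eq_prod_roots, Fin.prod_univ_fun_getElem p.roots.toList (s - ·),
    ← Multiset.prod_coe, ← Multiset.map_coe, Multiset.coe_toList]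

end Polynomial

open Polynomial

theorem esym_eq_coeff_prod_X_add_C {n r : ℕ} (hrn : r ≤ n) (y : Fin n → ℝ) :
    esym n r y = (∏ i, (X + C (y i))).coeff (n - r) := by
  rw [Finset.prod_X_add_C_coeff _ _ (by simp), card_univ, Fintype.card_fin,
    Nat.sub_sub_self hrn, esym]

theorem esym_add_const_eq_eval_hasseDeriv {n r : ℕ} (hrn : r ≤ n) (x : Fin n → ℝ) (s : ℝ) :
    esym n r (fun i => s + x i) = (hasseDeriv (n - r) (∏ i, (X + C (x i)))).eval s := by
  rw [esym_eq_coeff_prod_X_add_C hrn, ← taylor_coeff, taylor_apply, Polynomial.prod_comp]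
  congr 2; ext1 i
  simp only [add_comp, X_comp, C_comp, C_add]
  ring

theorem esym_isHyperbolic_general (n r : ℕ) (hrn : r ≤ n) :
    IsHyperbolic r (esym n r) (fun _ => (1 : ℝ)) := by
  intro x
  set P : ℝ[X] := ∏ i, (X + C (x i))
  have hP : P.Splits := Splits.prod fun i _ => Splits.X_add_C (x i)
  have hdeg : (hasseDeriv (n - r) P).natDegree = r := by
    rw [natDegree_hasseDeriv, natDegree_prod_of_monic _ _ fun i _ => monic_X_add_C (x i)]
    simp only [natDegree_X_add_C, sum_const, card_univ, Fintype.card_fin, smul_eq_mul, mul_one]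
    omega
  obtain ⟨roots, hroots⟩ :=
    (hP.hasseDeriv_of_real (n - r)).exists_eval_eq_leadingCoeff_mul_prod hdeg
  refine ⟨(hasseDeriv (n - r) P).leadingCoeff, roots, fun s => ?_⟩
  have hshift : s • (fun _ => (1 : ℝ)) + x = fun i => s + x i := by ext i; simp
  rw [hshift, esym_add_const_eq_eval_hasseDeriv hrn, hroots]

/-- For each `r = 1, ..., n`, the elementary symmetric polynomial `σ_r` is hyperbolic
with respect to `a = (1, ..., 1)`. -/
theorem esym_isHyperbolic (n r : ℕ) (hr : 1 ≤ r) (hrn : r ≤ n) :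
    IsHyperbolic r (esym n r) (fun _ => (1 : ℝ)) :=
  esym_isHyperbolic_general n r hrn
end

section
/- Let λ_1,...,λ_n > 0 and let σ_r be the r-th elementary symmetric polynomial, 2 ≤ r ≤ n. Then for any real numbers (y_1,...,y_n): σ_r(λ) ∑_{i,j} y_i y_j ∂²σ_r/∂x_i∂x_j(λ) ≤ ((r−1)/r) (∑_j y_j ∂σ_r/∂x_j(λ))². -/
/-!
Put `p(t) = σ_r(λ + t y)`. Then `p(0)`, `p'(0)` and `p''(0)` are `σ_r(λ)`, the directional
derivative and the Hessian form of `σ_r` at `λ`, and the claim reads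
`r p(0) p''(0) ≤ (r - 1) p'(0)²`: Newton's inequality for a real-rooted polynomial of degree at
most `r`.

`p` is real-rooted because `σ_r` is stable: by Gauss–Lucas, the roots of
`(∏ᵢ (X + zᵢ))^{(n-r)}` stay in any convex set containing all `-zᵢ`, and its constant coefficient
is `(n-r)! σ_r(z)`, so `σ_r(z) ≠ 0` whenever all `zᵢ` lie in one open half-plane bounded by a line through `0`. A non-real root
`t` of `p` would give `σ_r(λ t⁻¹ + y) = 0`, with all `λᵢ t⁻¹ + yᵢ` in the half-plane where
`Im(t⁻¹) Im w > 0`.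

For Newton's inequality, reverse `p` and differentiate `r - 2` times: the quadratic left over is
real-rooted by Gauss–Lucas again, and its discriminant is the inequality.
-/

open Finset

/-- Partial derivative `∂f/∂x_i` at `x`. -/
noncomputable def pd {n : ℕ} (f : (Fin n → ℝ) → ℝ) (i : Fin n) (x : Fin n → ℝ) : ℝ :=
  deriv (fun t => f (Function.update x i t)) (x i)

open Polynomial

namespace Polynomial

theorem rootSet_derivative_subset_of_convex {P : ℂ[X]} {K : Set ℂ} (hK : Convex ℝ K)
    (hP : P.rootSet ℂ ⊆ K) : P.derivative.rootSet ℂ ⊆ K := by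
  rcases lt_or_ge 0 P.degree with hdeg | hdeg
  · exact (rootSet_derivative_subset_convexHull_rootSet hdeg).trans (convexHull_min hP hK)
  · rw [derivative_of_natDegree_zero (natDegree_eq_zero_iff_degree_le_zero.mpr hdeg),
      rootSet_zero]
    exact Set.empty_subset K

theorem rootSet_iterate_derivative_subset_of_convex {P : ℂ[X]} {K : Set ℂ} (hK : Convex ℝ K)
    (hP : P.rootSet ℂ ⊆ K) (k : ℕ) : (derivative^[k] P).rootSet ℂ ⊆ K := by
  induction k with
  | zero => exact hP
  | succ k ih =>
    rw [Function.iterate_succ_apply']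
    exact rootSet_derivative_subset_of_convex hK ih

end Polynomial

theorem Finset.sum_prod_powersetCard_ne_zero_of_convex {ι : Type*} {K : Set ℂ}
    (hK : Convex ℝ K) (hK0 : (0 : ℂ) ∉ K) (s : Finset ι) {z : ι → ℂ} (hz : ∀ i ∈ s, z i ∈ K)
    {r : ℕ} (hr : r ≤ #s) : ∑ t ∈ s.powersetCard r, ∏ i ∈ t, z i ≠ 0 := by
  set h : ℂ[X] := ∏ i ∈ s, (X + C (z i))
  have hroots : h.rootSet ℂ ⊆ -K := by
    intro w hw
    have := aeval_eq_zero_of_mem_rootSet hw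
    simp only [h, map_prod, map_add, aeval_X, aeval_C, prod_eq_zero_iff] at this
    obtain ⟨i, hi, hwi⟩ := this
    rw [Set.mem_neg, ← eq_neg_of_add_eq_zero_right hwi]
    exact hz i hi
  set k := #s - r
  have hcoeff : ∀ j ≤ r, (derivative^[k] h).coeff j =
      (j + k).descFactorial k * ∑ t ∈ s.powersetCard (r - j), ∏ i ∈ t, z i := by
    intro j hj
    rw [coeff_iterate_derivative, prod_X_add_C_coeff _ _ (by omega), nsmul_eq_mul]
    congr 3
    omega
  have hne : derivative^[k] h ≠ 0 := fun h0 => by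
    have := hcoeff r le_rfl
    simp only [h0, coeff_zero, tsub_self, powersetCard_zero, sum_singleton, prod_empty,
      mul_one] at this
    exact absurd this.symm (by simp [Nat.descFactorial_eq_zero_iff_lt])
  intro hsum
  have h0 : (0 : ℂ) ∈ (derivative^[k] h).rootSet ℂ := by
    rw [mem_rootSet]
    refine ⟨hne, ?_⟩
    simpa [← coeff_zero_eq_eval_zero, hsum] using hcoeff 0 (Nat.zero_le r)
  exact hK0 (by simpa using rootSet_iterate_derivative_subset_of_convex hK.neg hroots k h0)

namespace Polynomial

def IsRealRooted (p : ℝ[X]) : Prop :=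
  p.rootSet ℂ ⊆ {z | z.im = 0}

namespace IsRealRooted

variable {p : ℝ[X]}

theorem iterate_derivative (hp : p.IsRealRooted) (k : ℕ) : (derivative^[k] p).IsRealRooted := by
  have hK : Convex ℝ {z : ℂ | z.im = 0} := convex_hyperplane Complex.imLm.isLinear 0
  have h := rootSet_iterate_derivative_subset_of_convex hK (P := p.map (algebraMap ℝ ℂ))
    (by simpa [IsRealRooted, rootSet, aroots] using hp) k
  simpa [IsRealRooted, rootSet, aroots, iterate_derivative_map] using h

theorem reflect (hp : p.IsRealRooted) {N : ℕ} (hpN : p.natDegree ≤ N) :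
    (reflect N p).IsRealRooted := by
  intro z hz
  by_contra him
  have hz0 : z ≠ 0 := fun h => him (by simp [h])
  let : Invertible z⁻¹ := invertibleOfNonzero (inv_ne_zero hz0)
  have hinv : aeval z⁻¹ p = 0 := by
    rw [aeval_def, ← eval₂_reflect_mul_pow _ _ N p hpN, invOf_eq_inv, inv_inv, ← aeval_def,
      aeval_eq_zero_of_mem_rootSet hz, zero_mul]
  have hmem : z⁻¹ ∈ p.rootSet ℂ := mem_rootSet.mpr ⟨fun h => by simp [h] at hz, hinv⟩
  exact him (by simpa [Complex.inv_im, hz0] using hp hmem)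

theorem exists_eval_eq_zero (hp : p.IsRealRooted) (hdeg : 0 < p.degree) :
    ∃ x : ℝ, p.eval x = 0 := by
  obtain ⟨z, hz⟩ := Complex.exists_root (f := p.map (algebraMap ℝ ℂ)) (by rwa [degree_map])
  have hmem : z ∈ p.rootSet ℂ :=
    mem_rootSet.mpr ⟨ne_zero_of_degree_gt hdeg, by simpa [aeval_def, eval_map] using hz⟩
  have hzre : (z.re : ℂ) = z := Complex.ext rfl (hp hmem).symm
  have := aeval_eq_zero_of_mem_rootSet hmem
  rw [← hzre] at this
  exact ⟨z.re, (RCLike.ofReal_eq_zero (K := ℂ)).mp ((ofReal_eval p z.re).trans this)⟩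

theorem discrim_nonneg (hp : p.IsRealRooted) (h2 : p.natDegree = 2) :
    0 ≤ discrim (p.coeff 2) (p.coeff 1) (p.coeff 0) := by
  have hp0 : p ≠ 0 := fun h => by simp [h] at h2
  obtain ⟨x, hx⟩ := hp.exists_eval_eq_zero (by rw [degree_eq_natDegree hp0, h2]; norm_num)
  rw [eval_eq_sum_range' (n := 3) (by omega)] at hx
  simp only [sum_range_succ, sum_range_zero, pow_zero, pow_one, zero_add] at hx
  rw [discrim_eq_sq_of_quadratic_eq_zero (x := x) (by linear_combination hx)]
  positivity

/-- Newton's inequality for the three leading coefficients. -/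
theorem mul_coeff_mul_coeff_le (hp : p.IsRealRooted) {d : ℕ} (hd : 2 ≤ d)
    (hpd : p.natDegree ≤ d) :
    2 * d * p.coeff d * p.coeff (d - 2) ≤ (d - 1) * p.coeff (d - 1) ^ 2 := by
  obtain ⟨m, rfl⟩ : ∃ m, d = m + 2 := ⟨d - 2, by omega⟩
  simp only [Nat.add_sub_cancel, show m + 2 - 1 = m + 1 by omega]
  rw [show ((m + 2 : ℕ) : ℝ) - 1 = m + 1 by push_cast; ring]
  by_cases hc : p.coeff (m + 2) = 0
  · rw [hc]; simp only [mul_zero, zero_mul]; positivity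
  set q := derivative^[m] p
  have hq : ∀ k, q.coeff k = (m + k).descFactorial m * p.coeff (m + k) := by
    simp [q, coeff_iterate_derivative, nsmul_eq_mul, add_comm]
  have hq2 : q.coeff 2 ≠ 0 :=
    hq 2 ▸ mul_ne_zero (by simp [Nat.descFactorial_eq_zero_iff_lt]) hc
  have hqdeg : q.natDegree = 2 := by
    refine le_antisymm ?_ (le_natDegree_of_ne_zero hq2)
    have : q.natDegree ≤ p.natDegree - m := natDegree_iterate_derivative p m
    omega
  have hD2 : ((m + 2).descFactorial m : ℝ) = (m + 2) * (m + 1) * m.factorial / 2 := by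
    have := Nat.factorial_mul_descFactorial (Nat.le_add_right m 2)
    simp only [Nat.add_sub_cancel_left, Nat.factorial_succ, Nat.factorial_zero] at this
    rw [eq_div_iff two_ne_zero]
    exact_mod_cast (by linarith : (m + 2).descFactorial m * 2 = (m + 2) * (m + 1) * m.factorial)
  have hD1 : ((m + 1).descFactorial m : ℝ) = (m + 1) * m.factorial := by
    have := Nat.factorial_mul_descFactorial (Nat.le_add_right m 1)
    simp only [Nat.add_sub_cancel_left, Nat.factorial_succ, Nat.factorial_zero] at this
    exact_mod_cast (by linarith : (m + 1).descFactorial m = (m + 1) * m.factorial)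
  have hdisc := (hp.iterate_derivative m).discrim_nonneg hqdeg
  rw [hq, hq, hq, add_zero, Nat.descFactorial_self, hD2, hD1, discrim] at hdisc
  have hgap : 0 ≤ ((m + 1) * (m.factorial : ℝ) ^ 2) *
      ((m + 1) * p.coeff (m + 1) ^ 2 - 2 * (m + 2) * p.coeff (m + 2) * p.coeff m) := by
    linear_combination hdisc
  have := nonneg_of_mul_nonneg_right hgap (by positivity)
  push_cast
  linarith

/-- Newton's inequality for the three lowest coefficients. -/
theorem mul_eval_mul_eval_derivative_derivative_le (hp : p.IsRealRooted) {d : ℕ} (hd : 2 ≤ d)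
    (hpd : p.natDegree ≤ d) :
    d * p.eval 0 * (derivative (derivative p)).eval 0 ≤ (d - 1) * (derivative p).eval 0 ^ 2 := by
  have h := (hp.reflect hpd).mul_coeff_mul_coeff_le hd
    (natDegree_reflect_le.trans (max_le le_rfl hpd))
  simp only [coeff_reflect, revAt_le le_rfl, revAt_le (Nat.sub_le d 1), revAt_le (Nat.sub_le d 2),
    Nat.sub_self, Nat.sub_sub_self (by omega : 1 ≤ d), Nat.sub_sub_self hd] at h
  simp only [← coeff_zero_eq_eval_zero, coeff_derivative]
  push_cast
  linarith

end IsRealRooted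

end Polynomial

theorem Finset.sum_sum_filter_mem_comm {α β M : Type*} [Fintype α] [DecidableEq α]
    [AddCommMonoid M] (T : Finset β) (g : β → Finset α) (f : α → β → M) :
    ∑ a, ∑ s ∈ T with a ∈ g s, f a s = ∑ s ∈ T, ∑ a ∈ g s, f a s :=
  Finset.sum_comm' fun a s => by simp only [mem_univ, mem_filter, true_and]; tauto

theorem Polynomial.derivative_prod_C_mul_X_add_C {ι R : Type*} [CommSemiring R] [DecidableEq ι]
    (s : Finset ι) (a b : ι → R) :
    derivative (∏ i ∈ s, (C (b i) * X + C (a i))) =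
      ∑ j ∈ s, (∏ i ∈ s.erase j, (C (b i) * X + C (a i))) * C (b j) := by
  simp [derivative_prod_finset]

theorem pd_eq_of_update_affine {n : ℕ} {f : (Fin n → ℝ) → ℝ} {j : Fin n} {x : Fin n → ℝ} {a b : ℝ}
    (h : ∀ t, f (Function.update x j t) = a * t + b) : pd f j x = a := by
  rw [pd, funext h]
  simp

theorem pd_sum_prod {n : ℕ} {ι : Type*} (S : Finset ι) (g : ι → Finset (Fin n)) (j : Fin n)
    (x : Fin n → ℝ) :
    pd (fun x => ∑ k ∈ S, ∏ i ∈ g k, x i) j x = ∑ k ∈ S with j ∈ g k, ∏ i ∈ (g k).erase j, x i := by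
  refine pd_eq_of_update_affine (b := ∑ k ∈ S with j ∉ g k, ∏ i ∈ g k, x i) fun t => ?_
  rw [← sum_filter_add_sum_filter_not S (j ∈ g ·), sum_mul]
  congr 1
  · refine sum_congr rfl fun k hk => ?_
    rw [prod_update_of_mem (mem_filter.mp hk).2, sdiff_singleton_eq_erase, mul_comm]
  · exact sum_congr rfl fun k hk => prod_update_of_notMem (mem_filter.mp hk).2 _ _

theorem pd_esym (n r : ℕ) (j : Fin n) (x : Fin n → ℝ) :
    pd (esym n r) j x = ∑ s ∈ univ.powersetCard r with j ∈ s, ∏ i ∈ s.erase j, x i :=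
  pd_sum_prod _ (fun s => s) j x

theorem pd_pd_esym (n r : ℕ) (i j : Fin n) (x : Fin n → ℝ) :
    pd (pd (esym n r) j) i x =
      ∑ s ∈ {s ∈ univ.powersetCard r | j ∈ s} with i ∈ Finset.erase s j,
        ∏ k ∈ (s.erase j).erase i, x k := by
  rw [funext (pd_esym n r j)]
  exact pd_sum_prod _ (fun s : Finset (Fin n) => s.erase j) i x

/-- `σ_r(x + t y)` as a polynomial in `t`. -/
noncomputable def esymAlong (n r : ℕ) (x y : Fin n → ℝ) : ℝ[X] :=
  ∑ s ∈ univ.powersetCard r, ∏ i ∈ s, (C (y i) * X + C (x i))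

section esymAlong

variable (n r : ℕ) (x y : Fin n → ℝ)

theorem natDegree_esymAlong_le : (esymAlong n r x y).natDegree ≤ r := by
  refine natDegree_sum_le_of_forall_le _ _ fun s hs => (natDegree_prod_le _ _).trans ?_
  calc ∑ i ∈ s, (C (y i) * X + C (x i)).natDegree ≤ ∑ i ∈ s, 1 := by
        gcongr
        exact natDegree_linear_le
    _ = r := by simp [(mem_powersetCard.mp hs).2]

theorem eval_zero_esymAlong : (esymAlong n r x y).eval 0 = esym n r x := by
  simp [esymAlong, esym, eval_finsetSum, eval_prod]

theorem eval_zero_derivative_esymAlong :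
    (derivative (esymAlong n r x y)).eval 0 = ∑ j, y j * pd (esym n r) j x := by
  simp only [pd_esym, mul_sum, sum_sum_filter_mem_comm]
  simp only [esymAlong, derivative_sum, derivative_prod_C_mul_X_add_C, eval_finsetSum, eval_mul,
    eval_prod, eval_add, eval_C, eval_X, mul_zero, zero_add]
  exact sum_congr rfl fun s _ => sum_congr rfl fun j _ => mul_comm _ _

theorem eval_zero_derivative_derivative_esymAlong :
    (derivative (derivative (esymAlong n r x y))).eval 0 =
      ∑ i, ∑ j, y i * y j * pd (pd (esym n r) j) i x := by
  rw [sum_comm]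
  simp only [pd_pd_esym, mul_sum, sum_sum_filter_mem_comm]
  simp only [esymAlong, derivative_sum, derivative_mul, derivative_C, mul_zero, add_zero,
    derivative_prod_C_mul_X_add_C, sum_mul, eval_finsetSum, eval_mul, eval_prod, eval_add, eval_C,
    eval_X, zero_add]
  exact sum_congr rfl fun s _ => sum_congr rfl fun j _ => sum_congr rfl fun i _ => by ring

variable {n r x}

theorem isRealRooted_esymAlong (hrn : r ≤ n) (hx : ∀ i, 0 < x i) :
    (esymAlong n r x y).IsRealRooted := by
  intro z hz
  by_contra him
  have hz0 : z ≠ 0 := fun h => him (by simp [h])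
  set c := (z⁻¹).im
  have hc : c ≠ 0 := by simpa [c, Complex.inv_im, hz0] using him
  set w : Fin n → ℂ := fun i => x i * z⁻¹ + y i
  have hw : ∀ i ∈ univ, w i ∈ {v : ℂ | 0 < c * v.im} := fun i _ => by
    show 0 < c * (w i).im
    simp only [w, Complex.add_im, Complex.ofReal_im, add_zero, Complex.im_ofReal_mul]
    rw [show c * (x i * c) = x i * c ^ 2 by ring]
    have := hx i
    positivity
  have hK : Convex ℝ {v : ℂ | 0 < c * v.im} := convex_halfSpace_gt (c • Complex.imLm).isLinear 0
  have hstable := sum_prod_powersetCard_ne_zero_of_convex hK (by simp) univ hw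
    (by simpa using hrn)
  have heval : aeval z (esymAlong n r x y) = z ^ r * ∑ s ∈ univ.powersetCard r, ∏ i ∈ s, w i := by
    simp only [esymAlong, map_sum, map_prod, mul_sum]
    refine sum_congr rfl fun s hs => ?_
    rw [← (mem_powersetCard.mp hs).2, ← prod_const, ← prod_mul_distrib]
    refine prod_congr rfl fun i _ => ?_
    simp only [w, map_add, map_mul, aeval_C, aeval_X, Complex.coe_algebraMap]
    field_simp
    ring
  exact mul_ne_zero (pow_ne_zero r hz0) hstable (heval ▸ aeval_eq_zero_of_mem_rootSet hz)

end esymAlong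

/-- For `λ` in the positive orthant and `2 ≤ r ≤ n`, for all `y ∈ ℝⁿ`:
`σ_r(λ) ∑_{i,j} y_i y_j ∂²σ_r/∂x_i∂x_j(λ) ≤ ((r-1)/r) (∑_j y_j ∂σ_r/∂x_j(λ))²`. -/
theorem esym_hessian_inequality (n r : ℕ) (hr : 2 ≤ r) (hrn : r ≤ n)
    (lam : Fin n → ℝ) (hpos : ∀ i, 0 < lam i) (y : Fin n → ℝ) :
    esym n r lam *
        ∑ i : Fin n, ∑ j : Fin n, y i * y j * pd (pd (esym n r) j) i lam ≤
      ((r - 1 : ℝ) / r) * (∑ j : Fin n, y j * pd (esym n r) j lam) ^ 2 := by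
  have h := (isRealRooted_esymAlong y hrn hpos).mul_eval_mul_eval_derivative_derivative_le hr
    (natDegree_esymAlong_le n r lam y)
  rw [eval_zero_esymAlong, eval_zero_derivative_esymAlong,
    eval_zero_derivative_derivative_esymAlong] at h
  rw [div_mul_eq_mul_div, le_div_iff₀ (by positivity)]
  linarith
end
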